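/- arXiv:1907.03321 — 3 statements merged into one kernel-verified Lean document; each statement's English description precedes it below -/
import Mathlib

section
/- Let a : [0,1] → ℝ be continuous on [0,1], continuously differentiable on (0,1], with a(x) > 0 for all x ∈ (0,1], a(0) = 0, and suppose there exists K ≥ 0 such that x·(deriv a)(x) ≤ K·a(x) for all x ∈ (0,1]. Then for every x ∈ (0,1] one has a(x) ≥ a(1)·x^K, and consequently 1/a(x) ≤ 1/(a(1)·x^K). -/
open Set

/-! The weight `a x * x ^ (-K)` has derivative `x ^ (-K - 1) * (x * a' x - K * a x)`, which the
degeneracy condition makes nonpositive; so the weight is antitone on `(0,1]` and dominates its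
value `a 1` at `1`. -/

lemma hasDerivAt_mul_rpow_neg {a : ℝ → ℝ} {K x : ℝ} (ha : DifferentiableAt ℝ a x)
    (hx : 0 < x) :
    HasDerivAt (fun y => a y * y ^ (-K)) (x ^ (-K - 1) * (x * deriv a x - K * a x)) x := by
  refine (ha.hasDerivAt.mul
    (Real.hasDerivAt_rpow_const (p := -K) (Or.inl hx.ne'))).congr_deriv ?_
  have hpow : x ^ (-K) = x ^ (-K - 1) * x := by
    rw [← Real.rpow_add_one hx.ne', sub_add_cancel]
  rw [hpow]
  ring

lemma antitoneOn_mul_rpow_neg {a : ℝ → ℝ} {K : ℝ} {s : Set ℝ} (hs : Convex ℝ s)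
    (hs_pos : s ⊆ Ioi 0) (ha : ∀ x ∈ s, DifferentiableAt ℝ a x)
    (hdeg : ∀ x ∈ s, x * deriv a x ≤ K * a x) :
    AntitoneOn (fun x => a x * x ^ (-K)) s := by
  have hderiv (x) (hx : x ∈ s) := hasDerivAt_mul_rpow_neg (K := K) (ha x hx) (hs_pos hx)
  refine antitoneOn_of_hasDerivWithinAt_nonpos hs
    (fun x hx => (hderiv x hx).continuousAt.continuousWithinAt)
    (fun x hx => (hderiv x (interior_subset hx)).hasDerivWithinAt) fun x hx => ?_
  have hx := interior_subset hx
  exact mul_nonpos_of_nonneg_of_nonpos (Real.rpow_nonneg (hs_pos hx).le _)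
    (sub_nonpos.mpr (hdeg x hx))

lemma mul_rpow_le_mul_rpow_of_deriv_le {a : ℝ → ℝ} {K : ℝ} {s : Set ℝ} (hs : Convex ℝ s)
    (hs_pos : s ⊆ Ioi 0) (ha : ∀ x ∈ s, DifferentiableAt ℝ a x)
    (hdeg : ∀ x ∈ s, x * deriv a x ≤ K * a x) {x y : ℝ} (hx : x ∈ s) (hy : y ∈ s)
    (hxy : x ≤ y) :
    a y * x ^ K ≤ a x * y ^ K := by
  have hx0 : 0 < x := hs_pos hx
  have hy0 : 0 < y := hs_pos hy
  have hmono := antitoneOn_mul_rpow_neg hs hs_pos ha hdeg hx hy hxy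
  simp only [Real.rpow_neg hx0.le, Real.rpow_neg hy0.le, ← div_eq_mul_inv] at hmono
  rwa [div_le_div_iff₀ (Real.rpow_pos_of_pos hy0 K) (Real.rpow_pos_of_pos hx0 K)] at hmono

theorem a_lower_bound_general
    (a : ℝ → ℝ) (K : ℝ)
    (ha_diff : ∀ x ∈ Ioc (0:ℝ) 1, DifferentiableAt ℝ a x)
    (ha_pos : ∀ x ∈ Ioc (0:ℝ) 1, 0 < a x)
    (hdeg : ∀ x ∈ Ioc (0:ℝ) 1, x * deriv a x ≤ K * a x) :
    ∀ x ∈ Ioc (0:ℝ) 1, a 1 * x ^ K ≤ a x ∧ 1 / a x ≤ 1 / (a 1 * x ^ K) := by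
  intro x hx
  have h1 : (1:ℝ) ∈ Ioc 0 1 := right_mem_Ioc.mpr one_pos
  have hbound : a 1 * x ^ K ≤ a x := by
    simpa only [Real.one_rpow, mul_one] using
      mul_rpow_le_mul_rpow_of_deriv_le (convex_Ioc 0 1) Ioc_subset_Ioi_self ha_diff hdeg hx h1 hx.2
  exact ⟨hbound, one_div_le_one_div_of_le
    (mul_pos (ha_pos 1 h1) (Real.rpow_pos_of_pos hx.1 K)) hbound⟩

/-- Under the degeneracy condition `x * a'(x) ≤ K * a(x)` on `(0,1]` with `K ≥ 0`,
one has `a x ≥ a 1 * x ^ K` on `(0,1]`, hence `1 / a x ≤ 1 / (a 1 * x ^ K)`. -/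
theorem a_lower_bound
    (a : ℝ → ℝ) (K : ℝ)
    (ha_cont : ContinuousOn a (Icc 0 1))
    (ha_diff : ∀ x ∈ Ioc (0:ℝ) 1, DifferentiableAt ℝ a x)
    (ha_deriv_cont : ContinuousOn (deriv a) (Ioc 0 1))
    (ha_pos : ∀ x ∈ Ioc (0:ℝ) 1, 0 < a x)
    (ha0 : a 0 = 0)
    (hK : 0 ≤ K)
    (hdeg : ∀ x ∈ Ioc (0:ℝ) 1, x * deriv a x ≤ K * a x) :
    ∀ x ∈ Ioc (0:ℝ) 1, a 1 * x ^ K ≤ a x ∧ 1 / a x ≤ 1 / (a 1 * x ^ K) :=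
  a_lower_bound_general a K ha_diff ha_pos hdeg
end

section
/- Let a : [0,1] → ℝ be continuous on [0,1], continuously differentiable on (0,1], with a(x) > 0 for all x ∈ (0,1], a(0) = 0, and suppose there exists K with 0 ≤ K < 2 such that x·(deriv a)(x) ≤ K·a(x) for all x ∈ (0,1]. Then the function x ↦ 1/√(a(x)) is Lebesgue integrable on (0,1), and ∫₀¹ 1/√(a(x)) dx ≤ 2/(√(a(1))·(2−K)). -/
open Set MeasureTheory

/-! The degeneracy condition says exactly that `x ↦ a x * x ^ (-K)` is nonincreasing, so
`a x ≥ a 1 * x ^ K` on `(0,1]`. Hence `1 / √(a x) ≤ x ^ (-K/2) / √(a 1)`, which is integrable on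
`(0,1)` because `K < 2`, with integral `2 / (√(a 1) * (2 - K))`. -/

theorem antitoneOn_mul_rpow_neg_of_mul_deriv_le {a : ℝ → ℝ} {K : ℝ} {D : Set ℝ}
    (hD : Convex ℝ D) (hD_pos : D ⊆ Ioi 0) (ha_cont : ContinuousOn a D)
    (ha_diff : ∀ x ∈ interior D, DifferentiableAt ℝ a x)
    (hdeg : ∀ x ∈ interior D, x * deriv a x ≤ K * a x) :
    AntitoneOn (fun x => a x * x ^ (-K)) D := by
  have hderiv : ∀ x ∈ interior D,
      HasDerivAt (fun x => a x * x ^ (-K)) ((x * deriv a x - K * a x) * x ^ (-K - 1)) x := by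
    intro x hx
    have hx0 : 0 < x := hD_pos (interior_subset hx)
    refine ((ha_diff x hx).hasDerivAt.mul
      (Real.hasDerivAt_rpow_const (p := -K) (Or.inl hx0.ne'))).congr_deriv ?_
    rw [Real.rpow_sub_one hx0.ne']
    field_simp
    ring
  refine antitoneOn_of_deriv_nonpos hD ?_ ?_ ?_
  · exact ha_cont.mul fun x hx =>
      (Real.continuousAt_rpow_const x (-K) (Or.inl (hD_pos hx).ne')).continuousWithinAt
  · exact fun x hx => (hderiv x hx).differentiableAt.differentiableWithinAt
  · intro x hx
    rw [(hderiv x hx).deriv]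
    exact mul_nonpos_of_nonpos_of_nonneg (sub_nonpos.2 (hdeg x hx))
      (Real.rpow_nonneg (hD_pos (interior_subset hx)).le _)

theorem mul_rpow_le_of_mul_deriv_le {a : ℝ → ℝ} {K : ℝ}
    (ha_cont : ContinuousOn a (Ioc 0 1))
    (ha_diff : ∀ x ∈ Ioo (0:ℝ) 1, DifferentiableAt ℝ a x)
    (hdeg : ∀ x ∈ Ioo (0:ℝ) 1, x * deriv a x ≤ K * a x)
    {x : ℝ} (hx : x ∈ Ioc (0:ℝ) 1) :
    a 1 * x ^ K ≤ a x := by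
  rw [← interior_Ioc] at ha_diff hdeg
  have hanti := antitoneOn_mul_rpow_neg_of_mul_deriv_le (convex_Ioc 0 1) Ioc_subset_Ioi_self
    ha_cont ha_diff hdeg hx (right_mem_Ioc.2 one_pos) hx.2
  calc a 1 * x ^ K = a 1 * 1 ^ (-K) * x ^ K := by rw [Real.one_rpow, mul_one]
    _ ≤ a x * x ^ (-K) * x ^ K := by gcongr; exact Real.rpow_nonneg hx.1.le K
    _ = a x := by rw [mul_assoc, ← Real.rpow_add hx.1, neg_add_cancel, Real.rpow_zero, mul_one]

theorem one_div_sqrt_le_of_mul_rpow_le {c x y K : ℝ} (hc : 0 < c) (hx : 0 < x)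
    (h : c * x ^ K ≤ y) :
    1 / √y ≤ (√c)⁻¹ * x ^ (-(K / 2)) := by
  have hsqrt : √(c * x ^ K) = √c * x ^ (K / 2) := by
    rw [Real.sqrt_mul hc.le, Real.sqrt_eq_rpow (x ^ K), ← Real.rpow_mul hx.le, mul_one_div]
  calc 1 / √y ≤ 1 / √(c * x ^ K) := by gcongr
    _ = (√c)⁻¹ * x ^ (-(K / 2)) := by rw [hsqrt, one_div, mul_inv, Real.rpow_neg hx.le]

theorem integral_Ioo_zero_one_rpow {r : ℝ} (hr : -1 < r) :
    ∫ x in Ioo (0:ℝ) 1, x ^ r = 1 / (r + 1) := by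
  rw [← integral_Ioc_eq_integral_Ioo, ← intervalIntegral.integral_of_le zero_le_one,
    integral_rpow (Or.inl hr), Real.one_rpow, Real.zero_rpow (by linarith), sub_zero]

theorem one_div_sqrt_a_integrable_general
    (a : ℝ → ℝ) (K : ℝ)
    (ha_cont : ContinuousOn a (Icc 0 1))
    (ha_diff : ∀ x ∈ Ioc (0:ℝ) 1, DifferentiableAt ℝ a x)
    (ha_pos : ∀ x ∈ Ioc (0:ℝ) 1, 0 < a x)
    (hK2 : K < 2)
    (hdeg : ∀ x ∈ Ioc (0:ℝ) 1, x * deriv a x ≤ K * a x) :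
    IntegrableOn (fun x => 1 / Real.sqrt (a x)) (Ioo 0 1) volume ∧
      ∫ x in Ioo (0:ℝ) 1, 1 / Real.sqrt (a x) ≤ 2 / (Real.sqrt (a 1) * (2 - K)) := by
  have ha1 : 0 < a 1 := ha_pos 1 (right_mem_Ioc.2 one_pos)
  have hbound : ∀ x ∈ Ioo (0:ℝ) 1, 1 / √(a x) ≤ (√(a 1))⁻¹ * x ^ (-(K / 2)) := fun x hx =>
    one_div_sqrt_le_of_mul_rpow_le ha1 hx.1 <| mul_rpow_le_of_mul_deriv_le
      (ha_cont.mono Ioc_subset_Icc_self) (fun y hy => ha_diff y (Ioo_subset_Ioc_self hy))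
      (fun y hy => hdeg y (Ioo_subset_Ioc_self hy)) (Ioo_subset_Ioc_self hx)
  have hg_int : IntegrableOn (fun x => (√(a 1))⁻¹ * x ^ (-(K / 2))) (Ioo 0 1) :=
    ((intervalIntegral.integrableOn_Ioo_rpow_iff one_pos).2 (by linarith)).const_mul _
  have hf_meas : AEStronglyMeasurable (fun x => 1 / √(a x)) (volume.restrict (Ioo 0 1)) :=
    ((ha_cont.mono Ioo_subset_Icc_self).aestronglyMeasurable measurableSet_Ioo).aemeasurable
      |>.sqrt.const_div 1 |>.aestronglyMeasurable
  have hf_int : IntegrableOn (fun x => 1 / √(a x)) (Ioo 0 1) := by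
    refine hg_int.mono' hf_meas ?_
    filter_upwards [ae_restrict_mem measurableSet_Ioo] with x hx
    rw [Real.norm_of_nonneg (by positivity)]
    exact hbound x hx
  refine ⟨hf_int, (setIntegral_mono_on hf_int hg_int measurableSet_Ioo hbound).trans_eq ?_⟩
  rw [integral_const_mul, integral_Ioo_zero_one_rpow (by linarith),
    show -(K / 2) + 1 = (2 - K) / 2 by ring, one_div_div, mul_div_assoc', inv_mul_eq_div, div_div]

/-- If `x * a'(x) ≤ K * a(x)` on `(0,1]` with `0 ≤ K < 2`, then `1 / √(a x)`
is Lebesgue integrable on `(0,1)` and `∫₀¹ 1/√(a x) dx ≤ 2/(√(a 1) * (2 - K))`. -/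
theorem one_div_sqrt_a_integrable
    (a : ℝ → ℝ) (K : ℝ)
    (ha_cont : ContinuousOn a (Icc 0 1))
    (ha_diff : ∀ x ∈ Ioc (0:ℝ) 1, DifferentiableAt ℝ a x)
    (ha_deriv_cont : ContinuousOn (deriv a) (Ioc 0 1))
    (ha_pos : ∀ x ∈ Ioc (0:ℝ) 1, 0 < a x)
    (ha0 : a 0 = 0)
    (hK0 : 0 ≤ K) (hK2 : K < 2)
    (hdeg : ∀ x ∈ Ioc (0:ℝ) 1, x * deriv a x ≤ K * a x) :
    IntegrableOn (fun x => 1 / Real.sqrt (a x)) (Ioo 0 1) volume ∧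
      ∫ x in Ioo (0:ℝ) 1, 1 / Real.sqrt (a x) ≤ 2 / (Real.sqrt (a 1) * (2 - K)) :=
  one_div_sqrt_a_integrable_general a K ha_cont ha_diff ha_pos hK2 hdeg
end

section
/- Let a : [0,1] → ℝ be continuous on [0,1], continuously differentiable on (0,1], with a(x) > 0 for all x ∈ (0,1], a(0) = 0, and suppose there exists K with 0 ≤ K < 2 such that x·(deriv a)(x) ≤ K·a(x) for all x ∈ (0,1]. Let c₁ > 0 and c₂ > 1/(a(1)·(2−K)), and define ψ(x) = c₁·(c₂ − ∫₀ˣ τ/a(τ) dτ). Then ψ(x) > 0 for every x ∈ [0,1]. -/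
open Set MeasureTheory

/-!
The degeneracy condition `x a'(x) ≤ K a(x)` says exactly that `x ↦ a(x) x^{-K}` is
nonincreasing, so `a(τ) ≥ a(1) τ^K` on `(0,1]`. Hence `τ / a(τ) ≤ τ^{1-K} / a(1)`, whose
integral over `[0,x] ⊆ [0,1]` is at most `1 / (a(1) (2-K)) < c₂` because `K < 2`.
-/

lemma mul_rpow_le_mul_rpow_of_mul_deriv_le {a : ℝ → ℝ} {K x y : ℝ} (hx : 0 < x) (hxy : x ≤ y)
    (ha : ∀ t ∈ Icc x y, DifferentiableAt ℝ a t)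
    (hdeg : ∀ t ∈ Icc x y, t * deriv a t ≤ K * a t) :
    a y * x ^ K ≤ a x * y ^ K := by
  have hpos : ∀ t ∈ Icc x y, 0 < t := fun t ht => hx.trans_le ht.1
  have hderiv : ∀ t ∈ Icc x y, HasDerivAt (fun t => a t * t ^ (-K))
      (t ^ (-K) / t * (t * deriv a t - K * a t)) t := by
    intro t ht
    refine ((ha t ht).hasDerivAt.mul (Real.hasDerivAt_rpow_const (p := -K)
      (Or.inl (hpos t ht).ne'))).congr_deriv ?_
    have ht0 := (hpos t ht).ne'
    rw [Real.rpow_sub_one ht0]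
    field_simp
    ring
  have hanti : AntitoneOn (fun t => a t * t ^ (-K)) (Icc x y) := by
    refine antitoneOn_of_deriv_nonpos (convex_Icc x y)
      (fun t ht => (hderiv t ht).continuousAt.continuousWithinAt)
      (fun t ht => (hderiv t (interior_subset ht)).differentiableAt.differentiableWithinAt)
      fun t ht => ?_
    have ht := interior_subset ht
    rw [(hderiv t ht).deriv]
    exact mul_nonpos_of_nonneg_of_nonpos (by have := hpos t ht; positivity)
      (by linarith [hdeg t ht])
  have key : a y * y ^ (-K) ≤ a x * x ^ (-K) :=
    hanti (left_mem_Icc.2 hxy) (right_mem_Icc.2 hxy) hxy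
  rw [Real.rpow_neg hx.le, Real.rpow_neg (hx.trans_le hxy).le, ← div_eq_mul_inv,
    ← div_eq_mul_inv, div_le_div_iff₀ (Real.rpow_pos_of_pos (hx.trans_le hxy) K)
    (Real.rpow_pos_of_pos hx K)] at key
  exact key

/-- No integrability of `f` is needed: if `f ≥ 0` is not integrable, its integral is `0`. -/
lemma intervalIntegral_le_of_nonneg_of_le {f g : ℝ → ℝ} {a b : ℝ} (hab : a ≤ b)
    (hf : ∀ x ∈ Ioc a b, 0 ≤ f x) (hfg : ∀ x ∈ Ioc a b, f x ≤ g x)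
    (hg : IntervalIntegrable g volume a b) :
    ∫ x in a..b, f x ≤ ∫ x in a..b, g x := by
  rw [intervalIntegral.integral_of_le hab, intervalIntegral.integral_of_le hab]
  exact integral_mono_of_nonneg (ae_restrict_of_forall_mem measurableSet_Ioc hf)
    (hg.1) (ae_restrict_of_forall_mem measurableSet_Ioc hfg)

lemma integral_rpow_one_sub_le {K x : ℝ} (hK : K < 2) (hx : x ∈ Icc (0 : ℝ) 1) :
    ∫ τ in (0 : ℝ)..x, τ ^ (1 - K) ≤ 1 / (2 - K) := by
  have h2K : 0 < 2 - K := by linarith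
  rw [integral_rpow (Or.inl (by linarith)), show 1 - K + 1 = 2 - K by ring,
    Real.zero_rpow h2K.ne', sub_zero]
  exact div_le_div_of_nonneg_right (Real.rpow_le_one hx.1 hx.2 h2K.le) h2K.le

lemma div_le_rpow_one_sub_div_of_mul_deriv_le {a : ℝ → ℝ} {K τ : ℝ}
    (ha_diff : ∀ x ∈ Ioc (0:ℝ) 1, DifferentiableAt ℝ a x)
    (ha_pos : ∀ x ∈ Ioc (0:ℝ) 1, 0 < a x)
    (hdeg : ∀ x ∈ Ioc (0:ℝ) 1, x * deriv a x ≤ K * a x) (hτ : τ ∈ Ioc (0:ℝ) 1) :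
    τ / a τ ≤ τ ^ (1 - K) / a 1 := by
  have hsub : Icc τ 1 ⊆ Ioc 0 1 := fun t ht => ⟨hτ.1.trans_le ht.1, ht.2⟩
  have hgrowth : a 1 * τ ^ K ≤ a τ := by
    simpa only [Real.one_rpow, mul_one] using mul_rpow_le_mul_rpow_of_mul_deriv_le hτ.1 hτ.2
      (fun t ht => ha_diff t (hsub ht)) (fun t ht => hdeg t (hsub ht))
  rw [Real.rpow_sub hτ.1, Real.rpow_one, div_div, div_le_div_iff_of_pos_left hτ.1 (ha_pos τ hτ)
    (mul_pos (Real.rpow_pos_of_pos hτ.1 K) (ha_pos 1 ⟨one_pos, le_rfl⟩)), mul_comm]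
  exact hgrowth

theorem psi_pos_general
    (a : ℝ → ℝ) (K c₁ c₂ : ℝ) (ψ : ℝ → ℝ)
    (ha_diff : ∀ x ∈ Ioc (0:ℝ) 1, DifferentiableAt ℝ a x)
    (ha_pos : ∀ x ∈ Ioc (0:ℝ) 1, 0 < a x)
    (hK2 : K < 2)
    (hdeg : ∀ x ∈ Ioc (0:ℝ) 1, x * deriv a x ≤ K * a x)
    (hc₁ : 0 < c₁) (hc₂ : 1 / (a 1 * (2 - K)) < c₂)
    (hψ : ∀ x, ψ x = c₁ * (c₂ - ∫ τ in (0:ℝ)..x, τ / a τ)) :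
    ∀ x ∈ Icc (0:ℝ) 1, 0 < ψ x := by
  intro x hx
  have hsub : Ioc 0 x ⊆ Ioc (0:ℝ) 1 := Ioc_subset_Ioc_right hx.2
  have hintegral : ∫ τ in (0:ℝ)..x, τ / a τ ≤ 1 / (a 1 * (2 - K)) :=
    calc ∫ τ in (0:ℝ)..x, τ / a τ
        ≤ ∫ τ in (0:ℝ)..x, τ ^ (1 - K) / a 1 :=
          intervalIntegral_le_of_nonneg_of_le hx.1
            (fun τ hτ => div_nonneg hτ.1.le (ha_pos τ (hsub hτ)).le)
            (fun τ hτ => div_le_rpow_one_sub_div_of_mul_deriv_le ha_diff ha_pos hdeg (hsub hτ))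
            ((intervalIntegral.intervalIntegrable_rpow' (by linarith)).div_const _)
      _ = (∫ τ in (0:ℝ)..x, τ ^ (1 - K)) / a 1 := intervalIntegral.integral_div _ _
      _ ≤ 1 / (2 - K) / a 1 := by
          gcongr
          · exact (ha_pos 1 ⟨one_pos, le_rfl⟩).le
          · exact integral_rpow_one_sub_le hK2 hx
      _ = 1 / (a 1 * (2 - K)) := by rw [div_div, mul_comm]
  rw [hψ x]
  exact mul_pos hc₁ (by linarith)

/-- If `x * a'(x) ≤ K * a(x)` on `(0,1]` with `0 ≤ K < 2`, `c₁ > 0` and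
`c₂ > 1/(a 1 * (2 - K))`, then the Carleman weight
`ψ(x) = c₁ * (c₂ - ∫₀ˣ τ/a(τ) dτ)` is positive on `[0,1]`. -/
theorem psi_pos
    (a : ℝ → ℝ) (K c₁ c₂ : ℝ) (ψ : ℝ → ℝ)
    (ha_cont : ContinuousOn a (Icc 0 1))
    (ha_diff : ∀ x ∈ Ioc (0:ℝ) 1, DifferentiableAt ℝ a x)
    (ha_deriv_cont : ContinuousOn (deriv a) (Ioc 0 1))
    (ha_pos : ∀ x ∈ Ioc (0:ℝ) 1, 0 < a x)
    (ha0 : a 0 = 0)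
    (hK0 : 0 ≤ K) (hK2 : K < 2)
    (hdeg : ∀ x ∈ Ioc (0:ℝ) 1, x * deriv a x ≤ K * a x)
    (hc₁ : 0 < c₁) (hc₂ : 1 / (a 1 * (2 - K)) < c₂)
    (hψ : ∀ x, ψ x = c₁ * (c₂ - ∫ τ in (0:ℝ)..x, τ / a τ)) :
    ∀ x ∈ Icc (0:ℝ) 1, 0 < ψ x :=
  psi_pos_general a K c₁ c₂ ψ ha_diff ha_pos hK2 hdeg hc₁ hc₂ hψ
end
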